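/- arXiv:2002.08773 — 4 statements merged into one kernel-verified Lean document; each statement's English description precedes it below -/
import Mathlib

section
/- Let f(z) be an analytic function in the closed disk {z ∈ ℂ : |z| ≤ R} that has no zeros in this disk and satisfies |f(0)| = 1. Then for every r with 0 < r < R and every z with |z| = r, one has log|f(z)| ≥ −(2r/(R−r))·log M_f(R), where M_f(R) = max_{|z|=R} |f(z)|. -/
/-!
On the disk, `log ‖f‖` is harmonic, hence the real part of a holomorphic `F` with `F 0 = 0`
(as `‖f 0‖ = 1`). By the maximum modulus principle `Re F ≤ log M_f(R)`, and the
Borel–Carathéodory inequality turns this one-sided bound into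
`‖F z‖ ≤ 2 r log M_f(R) / (R - r)`, which bounds `log ‖f z‖ = Re F z` from below.
-/

open Metric

namespace Complex

variable {f : ℂ → ℂ} {c z : ℂ} {M R : ℝ}

theorem exists_analyticOnNhd_ball_re_eq_log_norm (hf : AnalyticOnNhd ℂ f (ball c R))
    (hnz : ∀ w ∈ ball c R, f w ≠ 0) :
    ∃ F : ℂ → ℂ, AnalyticOnNhd ℂ F (ball c R) ∧
      (ball c R).EqOn (fun w ↦ (F w).re) (fun w ↦ Real.log ‖f w‖) :=
  InnerProductSpace.HarmonicOnNhd.exists_analyticOnNhd_ball_re_eq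
    fun w hw ↦ (hf w hw).harmonicAt_log_norm (hnz w hw)

theorem norm_le_sSup_norm_image_sphere (hR : 0 < R) (hf : DiffContOnCl ℂ f (ball c R))
    (hz : z ∈ closedBall c R) : ‖f z‖ ≤ sSup ((fun w ↦ ‖f w‖) '' sphere c R) := by
  have hbdd : BddAbove ((fun w ↦ ‖f w‖) '' sphere c R) :=
    ((isCompact_sphere c R).image_of_continuousOn
      (hf.continuousOn.mono (by rw [closure_ball c hR.ne']; exact sphere_subset_closedBall)).norm
      ).bddAbove
  refine norm_le_of_forall_mem_frontier_norm_le isBounded_ball hf (fun w hw ↦ ?_)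
    (by rwa [closure_ball c hR.ne'])
  rw [frontier_ball c hR.ne'] at hw
  exact le_csSup hbdd ⟨w, hw, rfl⟩

theorem borelCaratheodory_zero_of_nonneg (hM : 0 ≤ M) (hf : DifferentiableOn ℂ f (ball 0 R))
    (hf₁ : Set.MapsTo f (ball 0 R) {w | w.re ≤ M}) (hz : z ∈ ball 0 R) (hf₂ : f 0 = 0) :
    ‖f z‖ ≤ 2 * M * ‖z‖ / (R - ‖z‖) := by
  have hzR : ‖z‖ < R := mem_ball_zero_iff.mp hz
  have hR : 0 < R := (norm_nonneg z).trans_lt hzR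
  set a := 2 * M * ‖z‖ / (R - ‖z‖)
  set b := 2 * ‖z‖ / (R - ‖z‖)
  have hε : ∀ ε > 0, ‖f z‖ ≤ a + ε * b := by
    intro ε hε
    have := borelCaratheodory_zero (M := M + ε) (by positivity) hf
      (fun w hw ↦ le_trans (hf₁ hw) (le_add_of_nonneg_right hε.le)) hR hz hf₂
    convert this using 1
    ring
  have hlim : Filter.Tendsto (fun ε ↦ a + ε * b) (nhdsWithin 0 (Set.Ioi 0)) (nhds a) := by
    simpa using (((continuous_mul_const b).tendsto 0).const_add a).mono_left nhdsWithin_le_nhds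
  exact ge_of_tendsto hlim (eventually_nhdsWithin_of_forall hε)

theorem neg_mul_le_log_norm_of_log_norm_le (hf : AnalyticOnNhd ℂ f (ball 0 R))
    (hnz : ∀ w ∈ ball 0 R, f w ≠ 0) (h0 : ‖f 0‖ = 1) {A : ℝ}
    (hA : ∀ w ∈ ball 0 R, Real.log ‖f w‖ ≤ A) (hz : z ∈ ball 0 R) :
    -(2 * ‖z‖ / (R - ‖z‖)) * A ≤ Real.log ‖f z‖ := by
  obtain ⟨F, hFa, hFre⟩ := exists_analyticOnNhd_ball_re_eq_log_norm hf hnz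
  have h0R : (0 : ℂ) ∈ ball 0 R :=
    mem_ball_self ((norm_nonneg z).trans_lt (mem_ball_zero_iff.mp hz))
  have hF0 : (F 0).re = 0 := (hFre h0R).trans (by simp [h0])
  have hA0 : 0 ≤ A := by simpa [h0] using hA 0 h0R
  set G : ℂ → ℂ := fun w ↦ F w - F 0
  have hGre : ∀ w, (G w).re = (F w).re := by simp [G, hF0]
  have hG : ‖G z‖ ≤ 2 * A * ‖z‖ / (R - ‖z‖) := by
    refine borelCaratheodory_zero_of_nonneg hA0 ?_ (fun w hw ↦ ?_) hz ?_
    · exact hFa.differentiableOn.sub_const _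
    · simpa [Set.mem_ofPred_eq, hGre, hFre hw] using hA w hw
    · simp [G]
  calc -(2 * ‖z‖ / (R - ‖z‖)) * A = -(2 * A * ‖z‖ / (R - ‖z‖)) := by ring
    _ ≤ -‖G z‖ := neg_le_neg hG
    _ ≤ (G z).re := neg_le_of_abs_le (abs_re_le_norm _)
    _ = Real.log ‖f z‖ := (hGre z).trans (hFre hz)

end Complex

theorem statement0_general (R r : ℝ) (hR : 0 < R) (hrR : r < R)
    (f : ℂ → ℂ) (hf : AnalyticOnNhd ℂ f (closedBall (0 : ℂ) R))
    (hnz : ∀ z ∈ closedBall (0 : ℂ) R, f z ≠ 0)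
    (h0 : ‖f 0‖ = 1)
    (z : ℂ) (hz : ‖z‖ = r) :
    Real.log ‖f z‖ ≥
      -(2 * r / (R - r)) * Real.log (sSup ((fun w => ‖f w‖) '' sphere (0 : ℂ) R)) := by
  have hfb : AnalyticOnNhd ℂ f (ball 0 R) := hf.mono ball_subset_closedBall
  have hfc : DiffContOnCl ℂ f (ball (0 : ℂ) R) := by
    rw [← closure_ball (0 : ℂ) hR.ne'] at hf
    exact hf.differentiableOn.diffContOnCl
  have hzB : z ∈ ball (0 : ℂ) R := by rwa [mem_ball_zero_iff, hz]
  rw [← hz]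
  refine Complex.neg_mul_le_log_norm_of_log_norm_le hfb
    (fun w hw ↦ hnz w (ball_subset_closedBall hw)) h0 (fun w hw ↦ ?_) hzB
  have hwR := ball_subset_closedBall hw
  exact Real.log_le_log (norm_pos_iff.2 (hnz w hwR))
    (Complex.norm_le_sSup_norm_image_sphere hR hfc hwR)

/-- **Lower bound for zero-free analytic functions** (Levin, Theorem 11.2).
If `f` is analytic on the closed disk of radius `R`, has no zeros there, and `|f 0| = 1`,
then for every `0 < r < R` and every `z` with `|z| = r`,
`log |f z| ≥ -(2r/(R-r)) · log M_f(R)`, where `M_f(R) = max_{|w|=R} |f w|`. -/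
theorem statement0 (R r : ℝ) (hR : 0 < R) (hr : 0 < r) (hrR : r < R)
    (f : ℂ → ℂ) (hf : AnalyticOnNhd ℂ f (closedBall (0 : ℂ) R))
    (hnz : ∀ z ∈ closedBall (0 : ℂ) R, f z ≠ 0)
    (h0 : ‖f 0‖ = 1)
    (z : ℂ) (hz : ‖z‖ = r) :
    Real.log ‖f z‖ ≥
      -(2 * r / (R - r)) * Real.log (sSup ((fun w => ‖f w‖) '' sphere (0 : ℂ) R)) :=
  statement0_general R r hR hrR f hf hnz h0 z hz
end

section
/- Let v₀ be a nonconstant real analytic function on 𝕋. Then there is a constant c₀ = c₀(v₀) > 0 such that mes{x ∈ 𝕋 : |v₀(x) − E| < δ} < δ^{c₀} for all E ∈ ℝ and all sufficiently small δ > 0. -/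
/-!
Near every point some derivative `v₀⁽ⁿ⁾` with `n ≥ 1` is bounded away from zero, since otherwise
`v₀` would be locally, hence by analyticity globally, constant. On an interval where
`|f⁽ⁿ⁾| ≥ ε` one has `mes {|f - E| < δ} ≤ 4ⁿ (δ/ε)^(1/n)`, by induction on `n`: for `n = 1` this
is the mean value theorem; for `n + 1`, after changing the sign of `f`, `f⁽ⁿ⁾` increases at rate
`≥ ε`, so the interval splits into two intervals where `|f⁽ⁿ⁾| ≥ ρ` and one, of length `≤ 2ρ/ε`,
where `|f⁽ⁿ⁾| < ρ`. Covering `[0, 1]` by finitely many such intervals gives `mes ≤ C δ^c`, which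
is `< δ^(c/2)` for small `δ`.
-/

open MeasureTheory Set Filter Topology

section Sublevel

variable {f g : ℝ → ℝ} {s : Set ℝ} {ε δ E : ℝ}

theorem volume_le_of_forall_sub_le {S : Set ℝ} {d : ℝ} (h : ∀ x ∈ S, ∀ y ∈ S, y - x ≤ d) :
    volume S ≤ ENNReal.ofReal d :=
  (Real.volume_le_diam S).trans <| Metric.ediam_le fun x hx y hy => by
    rw [edist_dist, Real.dist_eq]
    exact ENNReal.ofReal_le_ofReal (abs_sub_le_iff.2 ⟨h y hy x hx, h x hx y hy⟩)

theorem Set.OrdConnected.mul_sub_le_sub_of_le_deriv (hs : s.OrdConnected)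
    (hg : DifferentiableOn ℝ g s) (hg' : ∀ x ∈ s, ε ≤ deriv g x) {x y : ℝ} (hx : x ∈ s)
    (hy : y ∈ s) (hxy : x ≤ y) : ε * (y - x) ≤ g y - g x :=
  hs.convex.mul_sub_le_image_sub_of_le_deriv hg.continuousOn
    (hg.mono interior_subset) (fun z hz => hg' z (interior_subset hz)) x hx y hy hxy

theorem volume_sublevel_le_of_le_deriv (hs : s.OrdConnected) (hε : 0 < ε)
    (hg : DifferentiableOn ℝ g s) (hg' : ∀ x ∈ s, ε ≤ deriv g x) (E : ℝ) :
    volume {x ∈ s | |g x - E| < δ} ≤ ENNReal.ofReal (2 * δ / ε) := by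
  refine volume_le_of_forall_sub_le fun x ⟨hx, hxE⟩ y ⟨hy, hyE⟩ => ?_
  rcases le_total x y with hxy | hyx
  · have hgrow := hs.mul_sub_le_sub_of_le_deriv hg hg' hx hy hxy
    rw [le_div_iff₀ hε]
    linarith [abs_lt.1 hxE, abs_lt.1 hyE]
  · have : 0 ≤ 2 * δ / ε := div_nonneg (by linarith [(abs_nonneg _).trans_lt hxE]) hε.le
    linarith

theorem Set.OrdConnected.sep_le_of_monotoneOn (hs : s.OrdConnected) (hg : MonotoneOn g s)
    (a : ℝ) : {x ∈ s | g x ≤ a}.OrdConnected :=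
  ⟨fun _ hx _ hy _ hz => ⟨hs.out hx.1 hy.1 hz, (hg (hs.out hx.1 hy.1 hz) hy.1 hz.2).trans hy.2⟩⟩

theorem Set.OrdConnected.sep_ge_of_monotoneOn (hs : s.OrdConnected) (hg : MonotoneOn g s)
    (a : ℝ) : {x ∈ s | a ≤ g x}.OrdConnected :=
  ⟨fun _ hx _ hy _ hz => ⟨hs.out hx.1 hy.1 hz, hx.2.trans (hg hx.1 (hs.out hx.1 hy.1 hz) hz.1)⟩⟩

theorem IsPreconnected.forall_le_or_forall_le_neg (hs : IsPreconnected s)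
    (hg : ContinuousOn g s) (hε : 0 < ε) (h : ∀ x ∈ s, ε ≤ |g x|) :
    (∀ x ∈ s, ε ≤ g x) ∨ (∀ x ∈ s, ε ≤ -g x) := by
  by_contra! ⟨⟨x, hx, hgx⟩, ⟨y, hy, hgy⟩⟩
  have hgx' : g x < 0 := by cases abs_cases (g x) <;> linarith [h x hx]
  have hgy' : 0 < g y := by cases abs_cases (g y) <;> linarith [h y hy]
  obtain ⟨z, hz, hgz⟩ := hs.intermediate_value hx hy hg ⟨hgx'.le, hgy'.le⟩
  linarith [h z hz, abs_eq_zero.2 hgz]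

theorem rpow_div_rpow_inv_succ {t : ℝ} (ht : 0 < t) {n : ℕ} (hn : n ≠ 0) :
    (t / t ^ (1 / (n + 1) : ℝ)) ^ (1 / n : ℝ) = t ^ (1 / (n + 1) : ℝ) := by
  have hn' : (n : ℝ) ≠ 0 := Nat.cast_ne_zero.2 hn
  nth_rw 1 [← Real.rpow_one t]
  rw [← Real.rpow_sub ht, ← Real.rpow_mul ht.le]
  congr 1
  field_simp
  ring

theorem volume_sublevel_le_of_le_abs_of_signed {n : ℕ} {B : ℝ}
    (hsigned : ∀ f : ℝ → ℝ, ∀ E, ContDiff ℝ n f → (∀ x ∈ s, ε ≤ iteratedDeriv n f x) →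
      volume {x ∈ s | |f x - E| < δ} ≤ ENNReal.ofReal B)
    (hs : IsPreconnected s) (hε : 0 < ε) (hf : ContDiff ℝ n f)
    (hfn : ∀ x ∈ s, ε ≤ |iteratedDeriv n f x|) (E : ℝ) :
    volume {x ∈ s | |f x - E| < δ} ≤ ENNReal.ofReal B := by
  rcases hs.forall_le_or_forall_le_neg (hf.continuous_iteratedDeriv n le_rfl).continuousOn hε hfn
    with hpos | hneg
  · exact hsigned f E hf hpos
  · have := hsigned (-f) (-E) hf.neg (by simpa using hneg)
    simpa [neg_add_eq_sub, abs_sub_comm E] using this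

theorem volume_sublevel_le_succ_of_le_iteratedDeriv {n : ℕ} (hn : n ≠ 0) (hs : s.OrdConnected)
    (hε : 0 < ε) (hδ : 0 < δ) (hf : ContDiff ℝ (n + 1 : ℕ) f)
    (IH : ∀ s' : Set ℝ, ∀ ε' > 0, s'.OrdConnected → (∀ x ∈ s', ε' ≤ |iteratedDeriv n f x|) →
      volume {x ∈ s' | |f x - E| < δ} ≤ ENNReal.ofReal (4 ^ n * (δ / ε') ^ (1 / n : ℝ)))
    (hpos : ∀ x ∈ s, ε ≤ iteratedDeriv (n + 1) f x) :
    volume {x ∈ s | |f x - E| < δ} ≤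
      ENNReal.ofReal (4 ^ (n + 1) * (δ / ε) ^ (1 / (n + 1 : ℕ) : ℝ)) := by
  set g := iteratedDeriv n f
  have hg : DifferentiableOn ℝ g s :=
    (hf.differentiable_iteratedDeriv n (by norm_cast; omega)).differentiableOn
  have hg' : ∀ x ∈ s, ε ≤ deriv g x := by simpa only [iteratedDeriv_succ] using hpos
  have hmono : MonotoneOn g s := fun x hx y hy hxy => by
    nlinarith [hs.mul_sub_le_sub_of_le_deriv hg hg' hx hy hxy]
  set t := δ / ε
  set u : ℝ := 1 / (n + 1)
  have ht : 0 < t := by positivity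
  -- `ρ` balances the two bounds: `(δ / ρ) ^ (1 / n) = ρ / ε`
  set ρ := ε * t ^ u
  have hρ : 0 < ρ := by positivity
  have hcover : {x ∈ s | |f x - E| < δ} ⊆ ({x ∈ {x ∈ s | g x ≤ -ρ} | |f x - E| < δ} ∪
      {x ∈ {x ∈ s | ρ ≤ g x} | |f x - E| < δ}) ∪ {x ∈ s | |g x - 0| < ρ} := by
    rintro x ⟨hx, hxE⟩
    rcases le_or_gt (g x) (-ρ) with hlo | hlo
    · exact Or.inl (Or.inl ⟨⟨hx, hlo⟩, hxE⟩)
    rcases le_or_gt ρ (g x) with hhi | hhi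
    · exact Or.inl (Or.inr ⟨⟨hx, hhi⟩, hxE⟩)
    · exact Or.inr ⟨hx, by rw [sub_zero, abs_lt]; exact ⟨hlo, hhi⟩⟩
  have hA := IH _ ρ hρ (hs.sep_le_of_monotoneOn hmono (-ρ)) fun x hx => by
    rw [abs_of_neg (by linarith [hx.2])]; linarith [hx.2]
  have hB := IH _ ρ hρ (hs.sep_ge_of_monotoneOn hmono ρ) fun x hx => hx.2.trans (le_abs_self _)
  have hT := volume_sublevel_le_of_le_deriv (δ := ρ) hs hε hg hg' 0
  have hδρ : (δ / ρ) ^ (1 / n : ℝ) = t ^ u := by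
    rw [div_mul_eq_div_div, rpow_div_rpow_inv_succ ht hn]
  have hρε : 2 * ρ / ε = 2 * t ^ u := by
    simp only [ρ, mul_div_assoc, mul_div_cancel_left₀ _ hε.ne']
  rw [hδρ] at hA hB
  rw [hρε] at hT
  have h4 : (1 : ℝ) ≤ 4 ^ n := one_le_pow₀ (by norm_num)
  calc volume {x ∈ s | |f x - E| < δ}
      ≤ ENNReal.ofReal (4 ^ n * t ^ u) + ENNReal.ofReal (4 ^ n * t ^ u) +
          ENNReal.ofReal (2 * t ^ u) :=
        (measure_mono hcover).trans <| (measure_union_le _ _).trans <|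
          add_le_add ((measure_union_le _ _).trans (add_le_add hA hB)) hT
    _ = ENNReal.ofReal ((2 * 4 ^ n + 2) * t ^ u) := by
        rw [← ENNReal.ofReal_add (by positivity) (by positivity),
          ← ENNReal.ofReal_add (by positivity) (by positivity)]
        ring_nf
    _ ≤ ENNReal.ofReal (4 ^ (n + 1) * t ^ u) :=
        ENNReal.ofReal_le_ofReal (by gcongr; rw [pow_succ]; linarith)
    _ = ENNReal.ofReal (4 ^ (n + 1) * t ^ (1 / (n + 1 : ℕ) : ℝ)) := by
        simp only [u, Nat.cast_add, Nat.cast_one]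

theorem volume_sublevel_le_of_le_abs_iteratedDeriv {n : ℕ} (hn : n ≠ 0) (hs : s.OrdConnected)
    (hε : 0 < ε) (hδ : 0 < δ) (hf : ContDiff ℝ n f) (hfn : ∀ x ∈ s, ε ≤ |iteratedDeriv n f x|)
    (E : ℝ) :
    volume {x ∈ s | |f x - E| < δ} ≤ ENNReal.ofReal (4 ^ n * (δ / ε) ^ (1 / n : ℝ)) := by
  induction n, Nat.one_le_iff_ne_zero.2 hn using Nat.le_induction generalizing f s ε E with
  | base =>
    refine volume_sublevel_le_of_le_abs_of_signed (fun f E hf hpos => ?_)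
      hs.isPreconnected hε hf hfn E
    refine (volume_sublevel_le_of_le_deriv hs hε (hf.differentiable one_ne_zero).differentiableOn
      (by simpa only [iteratedDeriv_one] using hpos) E).trans (ENNReal.ofReal_le_ofReal ?_)
    rw [Nat.cast_one, div_one, Real.rpow_one, pow_one, mul_div_assoc]
    gcongr
    norm_num
  | succ n hn1 IH =>
    refine volume_sublevel_le_of_le_abs_of_signed (fun f E hf hpos => ?_)
      hs.isPreconnected hε hf hfn E
    exact volume_sublevel_le_succ_of_le_iteratedDeriv (by omega) hs hε hδ hf
      (fun s' ε' hε' hs' h => IH (by omega) hs' hε' (hf.of_le (by norm_cast; omega)) h E) hpos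

end Sublevel

theorem exists_nhds_volume_sublevel_le_mul_rpow {f : ℝ → ℝ} {n : ℕ} {x : ℝ} (hn : n ≠ 0)
    (hf : ContDiff ℝ n f) (hx : iteratedDeriv n f x ≠ 0) :
    ∃ U ∈ 𝓝 x, ∃ C ≥ (0 : ℝ), ∃ c > (0 : ℝ), ∀ E δ : ℝ, 0 < δ →
      volume (U ∩ {y | |f y - E| < δ}) ≤ ENNReal.ofReal (C * δ ^ c) := by
  set ε := |iteratedDeriv n f x| / 2
  have hε : 0 < ε := half_pos (abs_pos.2 hx)
  have hcont := (hf.continuous_iteratedDeriv n le_rfl).abs.continuousAt (x := x)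
  obtain ⟨l, u, hxlu, hlu⟩ := mem_nhds_iff_exists_Ioo_subset.1 <|
    continuousAt_const.eventually_lt hcont (half_lt_self (abs_pos.2 hx))
  refine ⟨Ioo l u, Ioo_mem_nhds hxlu.1 hxlu.2, 4 ^ n * (ε ^ (1 / n : ℝ))⁻¹, by positivity,
    1 / n, by positivity, fun E δ hδ => ?_⟩
  refine (volume_sublevel_le_of_le_abs_iteratedDeriv hn ordConnected_Ioo hε hδ hf
    (fun y hy => (hlu hy).le) E).trans_eq ?_
  rw [Real.div_rpow hδ.le hε.le]
  ring_nf

theorem IsCompact.exists_measure_inter_le_mul_rpow {X ι : Type*} [TopologicalSpace X]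
    [MeasurableSpace X] {μ : Measure X} {K : Set X} (hK : IsCompact K) {A : ι → ℝ → Set X}
    (hloc : ∀ x ∈ K, ∃ U ∈ 𝓝 x, ∃ C ≥ (0 : ℝ), ∃ c > (0 : ℝ), ∀ i, ∀ δ ∈ Ioc (0 : ℝ) 1,
      μ (U ∩ A i δ) ≤ ENNReal.ofReal (C * δ ^ c)) :
    ∃ C c : ℝ, 0 < c ∧ ∀ i, ∀ δ ∈ Ioc (0 : ℝ) 1, μ (K ∩ A i δ) ≤ ENNReal.ofReal (C * δ ^ c) := by
  choose! U hU C hC c hc hbound using hloc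
  obtain ⟨t, htK, hcover⟩ := hK.elim_nhds_subcover U hU
  have hsmall : ∀ᶠ c₀ in 𝓝[>] (0 : ℝ), (∀ x ∈ t, c₀ ≤ c x) ∧ 0 < c₀ :=
    ((eventually_all_finset t).2 fun x hx =>
      nhdsWithin_le_nhds (eventually_le_nhds (hc x (htK x hx)))).and self_mem_nhdsWithin
  obtain ⟨c₀, hc₀t, hc₀⟩ := hsmall.exists
  refine ⟨∑ x ∈ t, C x, c₀, hc₀, fun i δ hδ => ?_⟩
  calc μ (K ∩ A i δ) ≤ μ (⋃ x ∈ t, U x ∩ A i δ) := by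
        rw [← iUnion₂_inter]; exact measure_mono (inter_subset_inter_left _ hcover)
    _ ≤ ∑ x ∈ t, μ (U x ∩ A i δ) := measure_biUnion_finset_le _ _
    _ ≤ ∑ x ∈ t, ENNReal.ofReal (C x * δ ^ c₀) := Finset.sum_le_sum fun x hx =>
        (hbound x (htK x hx) i δ hδ).trans <| ENNReal.ofReal_le_ofReal <|
          mul_le_mul_of_nonneg_left (Real.rpow_le_rpow_of_exponent_ge hδ.1 hδ.2 (hc₀t x hx))
            (hC x (htK x hx))
    _ = ENNReal.ofReal ((∑ x ∈ t, C x) * δ ^ c₀) := by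
        rw [Finset.sum_mul, ENNReal.ofReal_sum_of_nonneg fun x hx =>
          mul_nonneg (hC x (htK x hx)) (Real.rpow_nonneg hδ.1.le _)]

theorem eventually_mul_rpow_lt_rpow_half (C : ℝ) {c : ℝ} (hc : 0 < c) :
    ∀ᶠ δ in 𝓝[>] 0, C * δ ^ c < δ ^ (c / 2) := by
  have hlim : Tendsto (fun δ : ℝ => C * δ ^ (c / 2)) (𝓝[>] 0) (𝓝 0) := by
    have := ((Real.continuousAt_rpow_const 0 (c / 2) (Or.inr (by positivity))).tendsto.const_mul
      C).mono_left (nhdsWithin_le_nhds (s := Ioi 0))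
    rwa [Real.zero_rpow (by positivity), mul_zero] at this
  filter_upwards [hlim.eventually (gt_mem_nhds one_pos), self_mem_nhdsWithin] with δ hsmall hδ
  calc C * δ ^ c = C * δ ^ (c / 2) * δ ^ (c / 2) := by
        rw [mul_assoc, ← Real.rpow_add hδ, add_halves]
    _ < 1 * δ ^ (c / 2) := mul_lt_mul_of_pos_right hsmall (Real.rpow_pos_of_pos hδ _)
    _ = δ ^ (c / 2) := one_mul _

theorem AnalyticOnNhd.exists_iteratedDeriv_ne_zero {𝕜 F : Type*} [NontriviallyNormedField 𝕜]
    [CharZero 𝕜] [NormedAddCommGroup F] [NormedSpace 𝕜 F] [CompleteSpace F] {f : 𝕜 → F}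
    {U : Set 𝕜} (hf : AnalyticOnNhd 𝕜 f U) (hU : IsPreconnected U) {x : 𝕜} (hx : x ∈ U)
    (hne : ∃ y ∈ U, ∃ z ∈ U, f y ≠ f z) : ∃ n ≠ 0, iteratedDeriv n f x ≠ 0 := by
  by_contra! hzero
  obtain ⟨y, hy, z, hz, hyz⟩ := hne
  have hsub : AnalyticAt 𝕜 (f · - f x) x := (hf x hx).sub analyticAt_const
  have htop : analyticOrderAt (f · - f x) x = ⊤ := by
    refine ENat.eq_top_iff_forall_ge.2 fun m =>
      (natCast_le_analyticOrderAt_iff_iteratedDeriv_eq_zero hsub).2 fun i _ => ?_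
    rcases eq_or_ne i 0 with rfl | hi
    · simp
    · simp_rw [sub_eq_neg_add]
      rw [iteratedDeriv_const_add (Nat.pos_of_ne_zero hi), hzero i hi]
  have hconst : EqOn f (fun _ => f x) U :=
    hf.eqOn_of_preconnected_of_eventuallyEq analyticOnNhd_const hU hx <| by
      filter_upwards [analyticOrderAt_eq_top.1 htop] with w hw using sub_eq_zero.1 hw
  exact hyz ((hconst hy).trans (hconst hz).symm)

theorem statement2_general (v₀ : ℝ → ℝ)
    (han : AnalyticOnNhd ℝ v₀ Set.univ)
    (hnc : ∃ x y : ℝ, v₀ x ≠ v₀ y) :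
    ∃ c₀ > (0 : ℝ), ∃ δ₀ > (0 : ℝ), ∀ E : ℝ, ∀ δ : ℝ, 0 < δ → δ < δ₀ →
      volume {x ∈ Ico (0 : ℝ) 1 | |v₀ x - E| < δ} < ENNReal.ofReal (δ ^ c₀) := by
  obtain ⟨y, z, hyz⟩ := hnc
  have hloc (x : ℝ) : ∃ U ∈ 𝓝 x, ∃ C ≥ (0 : ℝ), ∃ c > (0 : ℝ), ∀ E, ∀ δ ∈ Ioc (0 : ℝ) 1,
      volume (U ∩ {x | |v₀ x - E| < δ}) ≤ ENNReal.ofReal (C * δ ^ c) := by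
    obtain ⟨n, hn, hx⟩ := han.exists_iteratedDeriv_ne_zero isPreconnected_univ (mem_univ x)
      ⟨y, mem_univ y, z, mem_univ z, hyz⟩
    obtain ⟨U, hU, C, hC, c, hc, hbound⟩ :=
      exists_nhds_volume_sublevel_le_mul_rpow hn han.contDiff hx
    exact ⟨U, hU, C, hC, c, hc, fun E δ hδ => hbound E δ hδ.1⟩
  obtain ⟨C, c, hc, hbound⟩ :=
    isCompact_Icc.exists_measure_inter_le_mul_rpow (μ := volume) fun x _ => hloc x
  obtain ⟨δ₀, hδ₀, hδ₀small⟩ := (nhdsGT_basis (0 : ℝ)).eventually_iff.1 <|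
    (eventually_mul_rpow_lt_rpow_half C hc).and (eventually_le_nhds one_pos |>.filter_mono
      nhdsWithin_le_nhds)
  refine ⟨c / 2, by positivity, δ₀, hδ₀, fun E δ hδ hδδ₀ => ?_⟩
  obtain ⟨hlt, hle⟩ := hδ₀small ⟨hδ, hδδ₀⟩
  calc volume {x ∈ Ico (0 : ℝ) 1 | |v₀ x - E| < δ}
      ≤ volume (Icc 0 1 ∩ {x | |v₀ x - E| < δ}) :=
        measure_mono fun x hx => ⟨Ico_subset_Icc_self hx.1, hx.2⟩
    _ ≤ ENNReal.ofReal (C * δ ^ c) := hbound E δ ⟨hδ, hle⟩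
    _ < ENNReal.ofReal (δ ^ (c / 2)) :=
        (ENNReal.ofReal_lt_ofReal_iff (Real.rpow_pos_of_pos hδ _)).2 hlt

/-- **Łojasiewicz inequality for real analytic functions on the torus**
(Bourgain, Lemma 7.3).  If `v₀` is a nonconstant real analytic `1`-periodic function
(i.e. a real analytic function on `𝕋 = ℝ/ℤ`), then there is `c₀ = c₀(v₀) > 0` such that
`mes {x ∈ 𝕋 : |v₀ x - E| < δ} < δ ^ c₀` for every `E ∈ ℝ` and all sufficiently small `δ > 0`. -/
theorem statement2 (v₀ : ℝ → ℝ)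
    (hper : Function.Periodic v₀ 1)
    (han : AnalyticOnNhd ℝ v₀ Set.univ)
    (hnc : ∃ x y : ℝ, v₀ x ≠ v₀ y) :
    ∃ c₀ > (0 : ℝ), ∃ δ₀ > (0 : ℝ), ∀ E : ℝ, ∀ δ : ℝ, 0 < δ → δ < δ₀ →
      volume {x ∈ Ico (0 : ℝ) 1 | |v₀ x - E| < δ} < ENNReal.ofReal (δ ^ c₀) :=
  statement2_general v₀ han hnc
end

section
/- Let v = g/f, where f, g are real analytic on 𝕋, f and v are nonconstant, and Z(f) = {x ∈ 𝕋 : f(x) = 0} ≠ ∅. Then there is a constant c₀ = c₀(v) > 0 such that mes{x ∈ 𝕋 : |v(x) − E| < ε} < ε^{c₀} for all E ∈ ℝ and all sufficiently small ε > 0 (the set is taken within the domain where f(x) ≠ 0). -/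
/-!
For `p = (a, b)` on the unit sphere of `ℝ²` the analytic function `a g + b f` is not identically
zero, because `g / f` is not constant; hence at each point of `[0, 1]` one of its derivatives is
nonzero. By compactness of the sphere times `[0, 1]`, finitely many intervals cover `[0, 1]` on each
of which a derivative of order at most `N` of `a g + b f` is at least `η > 0` in absolute value,
uniformly in `p`. The van der Corput type estimate `|{|φ| ≤ t}| ≤ 4 ^ k (t / η) ^ (1 / k)` when
`|φ⁽ᵏ⁾| ≥ η` on an interval then gives `|{|a g + b f| ≤ t}| ≤ C t ^ (1 / N)` on `[0, 1]`. Finally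
`|g / f - E| < ε` implies `|g - E f| ≤ (sup |f|) ε`, and `(1, -E)` is normalised onto the sphere.
-/

open MeasureTheory Set Filter Topology
open scoped ContDiff

section Sublevel

variable {φ ψ : ℝ → ℝ} {I : Set ℝ} {ρ t : ℝ}

lemma mul_abs_sub_le_abs_sub_of_le_abs_deriv (hψ : Differentiable ℝ ψ) (hI : I.OrdConnected)
    (hd : ∀ x ∈ I, ρ ≤ |deriv ψ x|) {x y : ℝ} (hx : x ∈ I) (hy : y ∈ I) :
    ρ * |x - y| ≤ |ψ x - ψ y| := by
  wlog hxy : x < y generalizing x y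
  · rcases (not_lt.1 hxy).eq_or_lt with rfl | hyx
    · simp
    · simpa only [abs_sub_comm] using this hy hx hyx
  obtain ⟨c, hc, hslope⟩ :=
    exists_deriv_eq_slope ψ hxy hψ.continuous.continuousOn hψ.differentiableOn
  have hyx : 0 < y - x := sub_pos.2 hxy
  have := hd c (hI.out hx hy (Ioo_subset_Icc_self hc))
  rw [hslope, abs_div, abs_of_pos hyx, le_div_iff₀ hyx] at this
  rwa [abs_sub_comm x, abs_of_pos hyx, abs_sub_comm]

lemma volume_sublevel_le_of_le_abs_deriv (hψ : Differentiable ℝ ψ) (hI : I.OrdConnected)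
    (hρ : 0 < ρ) (hd : ∀ x ∈ I, ρ ≤ |deriv ψ x|) (t : ℝ) :
    volume {x ∈ I | |ψ x| ≤ t} ≤ ENNReal.ofReal (2 * t / ρ) := by
  refine (Real.volume_le_diam _).trans (Metric.ediam_le_of_forall_dist_le fun x hx y hy => ?_)
  rw [Real.dist_eq, le_div_iff₀ hρ, mul_comm]
  calc ρ * |x - y| ≤ |ψ x - ψ y| := mul_abs_sub_le_abs_sub_of_le_abs_deriv hψ hI hd hx.1 hy.1
    _ ≤ |ψ x| + |ψ y| := abs_sub _ _
    _ ≤ 2 * t := by linarith [hx.2, hy.2]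

lemma monotoneOn_or_antitoneOn_of_deriv_ne_zero (hψ : Differentiable ℝ ψ) (hI : I.OrdConnected)
    (hd : ∀ x ∈ I, deriv ψ x ≠ 0) : MonotoneOn ψ I ∨ AntitoneOn ψ I := by
  rcases hasDerivWithinAt_forall_lt_or_forall_gt_of_forall_ne hI.convex
    (fun x _ => (hψ x).hasDerivAt.hasDerivWithinAt) hd with h | h
  · exact .inr (strictAntiOn_of_deriv_neg hI.convex hψ.continuous.continuousOn
      fun x hx => h x (interior_subset hx)).antitoneOn
  · exact .inl (strictMonoOn_of_deriv_pos hI.convex hψ.continuous.continuousOn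
      fun x hx => h x (interior_subset hx)).monotoneOn

lemma Set.OrdConnected.sep_mem_of_monotoneOn_or_antitoneOn {α β : Type*} [LinearOrder α]
    [LinearOrder β] {f : α → β} {s : Set α} {S : Set β} (hs : s.OrdConnected)
    (hS : S.OrdConnected) (hf : MonotoneOn f s ∨ AntitoneOn f s) :
    {x ∈ s | f x ∈ S}.OrdConnected := by
  refine ⟨fun x hx y hy z hz => ⟨hs.out hx.1 hy.1 hz, hS.uIcc_subset hx.2 hy.2 ?_⟩⟩
  have hzs := hs.out hx.1 hy.1 hz
  rcases hf with hf | hf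
  · exact mem_uIcc_of_le (hf hx.1 hzs hz.1) (hf hzs hy.1 hz.2)
  · exact mem_uIcc_of_ge (hf hzs hy.1 hz.2) (hf hx.1 hzs hz.1)


lemma volume_sublevel_le_of_le_abs_deriv_add (hψ : Differentiable ℝ ψ) (hI : I.OrdConnected)
    (hρ : 0 < ρ) (hd : ∀ x ∈ I, ρ ≤ |deriv ψ x|) {s : ℝ} {B : ENNReal}
    (hB : ∀ J : Set ℝ, J.OrdConnected → (∀ x ∈ J, s ≤ |ψ x|) →
      volume {x ∈ J | |φ x| ≤ t} ≤ B) :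
    volume {x ∈ I | |φ x| ≤ t} ≤ ENNReal.ofReal (2 * s / ρ) + 2 * B := by
  have hmono := monotoneOn_or_antitoneOn_of_deriv_ne_zero hψ hI fun x hx h => by
    have := hd x hx
    rw [h, abs_zero] at this
    linarith
  set Jp := {x ∈ I | ψ x ∈ Ioi s}
  set Jm := {x ∈ I | ψ x ∈ Iio (-s)}
  have hcover : {x ∈ I | |φ x| ≤ t} ⊆
      {x ∈ I | |ψ x| ≤ s} ∪ ({x ∈ Jp | |φ x| ≤ t} ∪ {x ∈ Jm | |φ x| ≤ t}) := by
    rintro x ⟨hxI, hxφ⟩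
    rcases le_or_gt |ψ x| s with h | h
    · exact .inl ⟨hxI, h⟩
    · rcases lt_abs.1 h with h | h
      · exact .inr (.inl ⟨⟨hxI, h⟩, hxφ⟩)
      · exact .inr (.inr ⟨⟨hxI, lt_neg_of_lt_neg h⟩, hxφ⟩)
  have hJp := hB Jp (hI.sep_mem_of_monotoneOn_or_antitoneOn ordConnected_Ioi hmono)
    fun x hx => hx.2.out.le.trans (le_abs_self _)
  have hJm := hB Jm (hI.sep_mem_of_monotoneOn_or_antitoneOn ordConnected_Iio hmono)
    fun x hx => (le_neg_of_le_neg hx.2.out.le).trans (neg_le_abs _)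
  calc volume {x ∈ I | |φ x| ≤ t}
      ≤ volume {x ∈ I | |ψ x| ≤ s} + (volume {x ∈ Jp | |φ x| ≤ t} + volume {x ∈ Jm | |φ x| ≤ t}) :=
        (measure_mono hcover).trans <|
          (measure_union_le _ _).trans (add_le_add_right (measure_union_le _ _) _)
    _ ≤ ENNReal.ofReal (2 * s / ρ) + (B + B) := by
        gcongr
        exact volume_sublevel_le_of_le_abs_deriv hψ hI hρ hd s
    _ = ENNReal.ofReal (2 * s / ρ) + 2 * B := by rw [two_mul B]

theorem volume_sublevel_le_of_le_abs_iteratedDeriv_s3 (hφ : ContDiff ℝ ∞ φ) {k : ℕ} (hk : 1 ≤ k)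
    (hI : I.OrdConnected) (hρ : 0 < ρ) (ht : 0 < t) (hd : ∀ x ∈ I, ρ ≤ |iteratedDeriv k φ x|) :
    volume {x ∈ I | |φ x| ≤ t} ≤ ENNReal.ofReal (4 ^ k * (t / ρ) ^ (k⁻¹ : ℝ)) := by
  induction k, hk using Nat.le_induction generalizing I ρ with
  | base =>
    refine (volume_sublevel_le_of_le_abs_deriv (hφ.differentiable (by simp)) hI hρ
      (by simpa using hd) t).trans (ENNReal.ofReal_le_ofReal ?_)
    have : 0 ≤ t / ρ := by positivity
    rw [Nat.cast_one, inv_one, Real.rpow_one, mul_div_assoc]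
    linarith
  | succ k hk IH =>
    -- `s = ρ u` makes both the piece where `|φ⁽ᵏ⁾| ≤ s` and the two pieces where `|φ⁽ᵏ⁾| ≥ s`
    -- contribute `O(u)`.
    set u := (t / ρ) ^ ((k + 1 : ℕ) : ℝ)⁻¹
    have hu : 0 < u := by positivity
    have hts : t / (ρ * u) = u ^ k := by
      have : u ^ (k + 1) = t / ρ := Real.rpow_inv_natCast_pow (by positivity) k.succ_ne_zero
      field_simp
      rw [mul_assoc, ← pow_succ', this]
      field_simp
    have hψ : Differentiable ℝ (iteratedDeriv k φ) :=
      hφ.differentiable_iteratedDeriv k (by exact_mod_cast WithTop.coe_lt_top _)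
    refine (volume_sublevel_le_of_le_abs_deriv_add hψ hI hρ (s := ρ * u)
      (B := ENNReal.ofReal (4 ^ k * u)) (by simpa [iteratedDeriv_succ] using hd)
      fun J hJ hJd => ?_).trans ?_
    · have := IH hJ (mul_pos hρ hu) hJd
      rwa [hts, Real.pow_rpow_inv_natCast hu.le (by omega)] at this
    · rw [← ENNReal.ofReal_ofNat 2, ← ENNReal.ofReal_mul zero_le_two,
        ← ENNReal.ofReal_add (by positivity) (by positivity)]
      refine ENNReal.ofReal_le_ofReal ?_
      have : (4 : ℝ) ≤ 4 ^ k := le_self_pow₀ (by norm_num) (by omega)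
      rw [mul_div_assoc, mul_div_cancel_left₀ _ hρ.ne', pow_succ]
      nlinarith

theorem volume_sublevel_le_of_le_abs_iteratedDeriv_of_le (hφ : ContDiff ℝ ∞ φ) {k N : ℕ}
    (hkN : k ≤ N) (hI : I.OrdConnected) (ht : 0 < t) (htρ : t < ρ)
    (hd : ∀ x ∈ I, ρ ≤ |iteratedDeriv k φ x|) :
    volume {x ∈ I | |φ x| ≤ t} ≤ ENNReal.ofReal (4 ^ N * (t / ρ) ^ (N⁻¹ : ℝ)) := by
  rcases Nat.eq_zero_or_pos k with rfl | hk
  · have : {x ∈ I | |φ x| ≤ t} = ∅ := eq_empty_iff_forall_notMem.2 fun x hx => by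
      have := hd x hx.1
      rw [iteratedDeriv_zero] at this
      linarith [hx.2]
    simp [this]
  have hρ : 0 < ρ := ht.trans htρ
  refine (volume_sublevel_le_of_le_abs_iteratedDeriv_s3 hφ hk hI hρ ht hd).trans
    (ENNReal.ofReal_le_ofReal ?_)
  exact mul_le_mul (pow_le_pow_right₀ (by norm_num) hkN)
    (Real.rpow_le_rpow_of_exponent_ge (by positivity) ((div_le_one hρ).2 htρ.le)
      (by gcongr)) (by positivity) (by positivity)

theorem volume_sublevel_le_of_subset_biUnion (hφ : ContDiff ℝ ∞ φ) {ι : Type*} {T : Finset ι}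
    {W : ι → Set ℝ} {n : ι → ℕ} {N : ℕ} (hW : ∀ i ∈ T, (W i).OrdConnected)
    (hn : ∀ i ∈ T, n i ≤ N) (hd : ∀ i ∈ T, ∀ x ∈ W i, ρ ≤ |iteratedDeriv (n i) φ x|)
    {A : Set ℝ} (hA : A ⊆ ⋃ i ∈ T, W i) (ht : 0 < t) (htρ : t < ρ) :
    volume {x ∈ A | |φ x| ≤ t} ≤ T.card * ENNReal.ofReal (4 ^ N * (t / ρ) ^ (N⁻¹ : ℝ)) := by
  have hcover : {x ∈ A | |φ x| ≤ t} ⊆ ⋃ i ∈ T, {x ∈ W i | |φ x| ≤ t} := fun x hx => by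
    obtain ⟨i, hi, hxi⟩ := mem_iUnion₂.1 (hA hx.1)
    exact mem_iUnion₂.2 ⟨i, hi, hxi, hx.2⟩
  calc volume {x ∈ A | |φ x| ≤ t} ≤ ∑ i ∈ T, volume {x ∈ W i | |φ x| ≤ t} :=
        (measure_mono hcover).trans (measure_biUnion_finset_le _ _)
    _ ≤ T.card • ENNReal.ofReal (4 ^ N * (t / ρ) ^ (N⁻¹ : ℝ)) :=
        Finset.sum_le_card_nsmul _ _ _ fun i hi =>
          volume_sublevel_le_of_le_abs_iteratedDeriv_of_le hφ (hn i hi) (hW i hi) ht htρ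
            (hd i hi)
    _ = T.card * ENNReal.ofReal (4 ^ N * (t / ρ) ^ (N⁻¹ : ℝ)) := nsmul_eq_mul _ _

end Sublevel

lemma exists_forall_mem_nhds_ball_le_abs {P : Type*} [TopologicalSpace P] {F : P × ℝ → ℝ}
    {q : P × ℝ} (hF : ContinuousAt F q) (hq : F q ≠ 0) :
    ∃ η > 0, ∃ U ∈ 𝓝 q.1, ∃ r > 0, ∀ p ∈ U, ∀ x ∈ Metric.ball q.2 r, η ≤ |F (p, x)| := by
  have hev : ∀ᶠ q' in 𝓝 q, |F q| / 2 < |F q'| :=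
    (continuous_abs.continuousAt.comp hF).eventually
      (lt_mem_nhds (half_lt_self (abs_pos.2 hq)))
  rw [nhds_prod_eq] at hev
  obtain ⟨pa, hpa, pb, hpb, hpapb⟩ := Filter.eventually_prod_iff.1 hev
  obtain ⟨r, hr, hrpb⟩ := Metric.eventually_nhds_iff.1 hpb
  exact ⟨|F q| / 2, by positivity, {p | pa p}, hpa, r, hr, fun p hp x hx =>
    (hpapb hp (hrpb hx)).le⟩

theorem exists_volume_sublevel_le_rpow {P : Type*} [TopologicalSpace P] {S : Set P}
    (hS : IsCompact S) {K : Set ℝ} (hK : IsCompact K) {φ : P → ℝ → ℝ}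
    (hφ : ∀ p, ContDiff ℝ ∞ (φ p))
    (hcont : ∀ n, Continuous fun q : P × ℝ => iteratedDeriv n (φ q.1) q.2)
    (hnz : ∀ p ∈ S, ∀ x ∈ K, ∃ n, iteratedDeriv n (φ p) x ≠ 0) :
    ∃ C a : ℝ, 0 < a ∧ ∃ η > 0, ∀ p ∈ S, ∀ t, 0 < t → t < η →
      volume {x ∈ K | |φ p x| ≤ t} ≤ ENNReal.ofReal (C * t ^ a) := by
  classical
  have hloc : ∀ q ∈ S ×ˢ K, ∃ n : ℕ, ∃ η > 0, ∃ U ∈ 𝓝 q.1, ∃ r > 0,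
      ∀ p ∈ U, ∀ x ∈ Metric.ball q.2 r, η ≤ |iteratedDeriv n (φ p) x| := by
    rintro q ⟨hp, hx⟩
    obtain ⟨n, hn⟩ := hnz q.1 hp q.2 hx
    exact ⟨n, exists_forall_mem_nhds_ball_le_abs (hcont n).continuousAt hn⟩
  choose! n η hη U hU r hr hbound using hloc
  obtain ⟨T, hTS, hTcov⟩ := (hS.prod hK).elim_nhds_subcover
    (fun q => U q ×ˢ Metric.ball q.2 (r q))
    fun q hq => prod_mem_nhds (hU q hq) (Metric.ball_mem_nhds _ (hr q hq))
  obtain ⟨η₀, hη₀, hη₀le⟩ : ∃ η₀ > 0, ∀ q ∈ T, η₀ ≤ η q := by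
    rcases T.eq_empty_or_nonempty with rfl | hT
    · exact ⟨1, one_pos, by simp⟩
    · exact ⟨T.inf' hT η, (Finset.lt_inf'_iff hT).2 fun q hq => hη q (hTS q hq),
        fun q hq => T.inf'_le η hq⟩
  set N := T.sup n + 1
  refine ⟨T.card * 4 ^ N / η₀ ^ (N⁻¹ : ℝ), (N : ℝ)⁻¹, by positivity, η₀, hη₀,
    fun p hp t ht htη => ?_⟩
  have hcover : K ⊆ ⋃ q ∈ T.filter (p ∈ U ·), Metric.ball q.2 (r q) := fun x hx => by
    obtain ⟨q, hqT, hpq, hxq⟩ := mem_iUnion₂.1 (hTcov (mk_mem_prod hp hx))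
    exact mem_iUnion₂.2 ⟨q, Finset.mem_filter.2 ⟨hqT, hpq⟩, hxq⟩
  calc volume {x ∈ K | |φ p x| ≤ t}
      ≤ (T.filter (p ∈ U ·)).card * ENNReal.ofReal (4 ^ N * (t / η₀) ^ (N⁻¹ : ℝ)) :=
        volume_sublevel_le_of_subset_biUnion (hφ p)
          (fun q _ => by rw [Real.ball_eq_Ioo]; exact ordConnected_Ioo)
          (fun q hq => Nat.le_succ_of_le (T.le_sup (Finset.mem_filter.1 hq).1))
          (fun q hq x hx => (hη₀le q (Finset.mem_filter.1 hq).1).trans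
            (hbound q (hTS q (Finset.mem_filter.1 hq).1) p (Finset.mem_filter.1 hq).2 x hx))
          hcover ht htη
    _ ≤ T.card * ENNReal.ofReal (4 ^ N * (t / η₀) ^ (N⁻¹ : ℝ)) := by
        gcongr
        exact Finset.filter_subset _ _
    _ = ENNReal.ofReal (T.card * 4 ^ N / η₀ ^ (N⁻¹ : ℝ) * t ^ (N⁻¹ : ℝ)) := by
        rw [← ENNReal.ofReal_natCast, ← ENNReal.ofReal_mul (by positivity),
          Real.div_rpow ht.le hη₀.le]
        ring_nf

theorem AnalyticOnNhd.exists_iteratedDeriv_ne_zero_s3 {𝕜 E : Type*} [NontriviallyNormedField 𝕜]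
    [CharZero 𝕜] [PreconnectedSpace 𝕜] [NormedAddCommGroup E] [NormedSpace 𝕜 E] [CompleteSpace E]
    {h : 𝕜 → E} (hh : AnalyticOnNhd 𝕜 h univ) (hne : h ≠ 0) (x : 𝕜) :
    ∃ n, iteratedDeriv n h x ≠ 0 := by
  by_contra! H
  refine hne ((AnalyticOnNhd.analyticOrderAt_eq_top_iff_eq_zero x fun z => hh z trivial).1 ?_)
  exact ENat.eq_top_iff_forall_ge.2 fun m =>
    (natCast_le_analyticOrderAt_iff_iteratedDeriv_eq_zero (hh x trivial)).2 fun i _ => H i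

lemma mul_add_mul_ne_zero_of_div_ne_div {α : Type*} {f g : α → ℝ}
    (hv : ∃ x y, f x ≠ 0 ∧ f y ≠ 0 ∧ g x / f x ≠ g y / f y) {p : ℝ × ℝ} (hp : p ≠ 0) :
    (fun x => p.1 * g x + p.2 * f x) ≠ 0 := by
  obtain ⟨x, y, hx, hy, hxy⟩ := hv
  obtain ⟨a, b⟩ := p
  intro h0
  have hz (z : α) : a * g z + b * f z = 0 := congrFun h0 z
  rcases eq_or_ne a 0 with rfl | ha
  · have hb : b ≠ 0 := fun hb => hp (by simp [hb])
    exact hx (by simpa [hb] using hz x)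
  · have hv (z : α) (hz' : f z ≠ 0) : g z / f z = -b / a := by
      field_simp
      linarith [hz z]
    exact hxy ((hv x hx).trans (hv y hy).symm)

lemma iteratedDeriv_mul_add_mul {f g : ℝ → ℝ} (hf : ContDiff ℝ ∞ f) (hg : ContDiff ℝ ∞ g)
    (a b : ℝ) (n : ℕ) :
    iteratedDeriv n (fun x => a * g x + b * f x) =
      fun x => a * iteratedDeriv n g x + b * iteratedDeriv n f x := by
  funext x
  have hn : (n : WithTop ℕ∞) ≤ ∞ := by exact_mod_cast le_top
  rw [iteratedDeriv_fun_add (contDiffAt_const.mul (hg.of_le hn).contDiffAt)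
    (contDiffAt_const.mul (hf.of_le hn).contDiffAt), iteratedDeriv_const_mul_field,
    iteratedDeriv_const_mul_field]

lemma exists_forall_mul_rpow_lt_rpow (C : ℝ) {a : ℝ} (ha : 0 < a) :
    ∃ ε₁ > 0, ∀ ε, 0 < ε → ε < ε₁ → C * ε ^ a < ε ^ (a / 2) := by
  have hlim : Tendsto (fun ε : ℝ => C * ε ^ (a / 2)) (𝓝 0) (𝓝 0) := by
    simpa [Real.zero_rpow (half_pos ha).ne'] using
      ((Real.continuousAt_rpow_const 0 (a / 2) (.inr (half_pos ha).le)).tendsto.const_mul C)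
  obtain ⟨ε₁, hε₁, hsmall⟩ := Metric.eventually_nhds_iff.1 (hlim.eventually (gt_mem_nhds one_pos))
  refine ⟨ε₁, hε₁, fun ε hε hεε₁ => ?_⟩
  have h1 : C * ε ^ (a / 2) < 1 := hsmall (by rwa [Real.dist_eq, sub_zero, abs_of_pos hε])
  calc C * ε ^ a = C * ε ^ (a / 2) * ε ^ (a / 2) := by
        rw [mul_assoc, ← Real.rpow_add hε, add_halves]
    _ < 1 * ε ^ (a / 2) := by gcongr
    _ = ε ^ (a / 2) := one_mul _

lemma sep_abs_div_sub_lt_subset {f g : ℝ → ℝ} {A B : Set ℝ} (hAB : A ⊆ B) {M : ℝ}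
    (hM : ∀ x ∈ A, |f x| ≤ M) {c : ℝ} (hc : |c| ≤ 1) (E ε : ℝ) :
    {x ∈ A | f x ≠ 0 ∧ |g x / f x - E| < ε} ⊆ {x ∈ B | |c * g x + c * -E * f x| ≤ M * ε} := by
  rintro x ⟨hxA, hfx, hx⟩
  refine ⟨hAB hxA, ?_⟩
  have : c * g x + c * -E * f x = c * (f x * (g x / f x - E)) := by field_simp; ring
  rw [this, abs_mul, abs_mul]
  calc |c| * (|f x| * |g x / f x - E|) ≤ 1 * (M * ε) := by
        gcongr
        · exact (abs_nonneg _).trans (hM x hxA)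
        exact hM x hxA
    _ = M * ε := one_mul _

theorem exists_volume_sublevel_mul_add_mul_le_rpow {f g : ℝ → ℝ}
    (hfan : AnalyticOnNhd ℝ f univ) (hgan : AnalyticOnNhd ℝ g univ)
    (hv : ∃ x y, f x ≠ 0 ∧ f y ≠ 0 ∧ g x / f x ≠ g y / f y) {K : Set ℝ} (hK : IsCompact K) :
    ∃ C a : ℝ, 0 < a ∧ ∃ η > 0, ∀ p ∈ Metric.sphere (0 : ℝ × ℝ) 1, ∀ t, 0 < t → t < η →
      volume {x ∈ K | |p.1 * g x + p.2 * f x| ≤ t} ≤ ENNReal.ofReal (C * t ^ a) := by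
  have hf : ContDiff ℝ ∞ f := hfan.contDiff
  have hg : ContDiff ℝ ∞ g := hgan.contDiff
  refine exists_volume_sublevel_le_rpow (isCompact_sphere 0 1) hK
    (fun p => (contDiff_const.mul hg).add (contDiff_const.mul hf)) (fun n => ?_)
    fun p hp x _ => AnalyticOnNhd.exists_iteratedDeriv_ne_zero_s3 (fun z _ =>
      (analyticAt_const.mul (hgan z trivial)).add (analyticAt_const.mul (hfan z trivial)))
      (mul_add_mul_ne_zero_of_div_ne_div hv (Metric.ne_of_mem_sphere hp one_ne_zero)) x
  simp only [iteratedDeriv_mul_add_mul hf hg]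
  have := hf.continuous_iteratedDeriv n (by exact_mod_cast le_top)
  have := hg.continuous_iteratedDeriv n (by exact_mod_cast le_top)
  fun_prop

lemma exists_abs_le_one_and_mk_mem_sphere (E : ℝ) :
    ∃ c : ℝ, |c| ≤ 1 ∧ ((c, c * -E) : ℝ × ℝ) ∈ Metric.sphere 0 1 := by
  refine ⟨‖((1 : ℝ), -E)‖⁻¹, ?_, ?_⟩
  · rw [abs_inv, abs_norm]
    exact inv_le_one_of_one_le₀ (by simp [Prod.norm_def])
  · have : ((‖((1 : ℝ), -E)‖⁻¹, ‖((1 : ℝ), -E)‖⁻¹ * -E) : ℝ × ℝ) =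
        ‖((1 : ℝ), -E)‖⁻¹ • ((1 : ℝ), -E) := by
      ext <;> simp
    rw [this, mem_sphere_zero_iff_norm]
    exact norm_smul_inv_norm (by simp)

theorem statement3_general (f g : ℝ → ℝ)
    (hfan : AnalyticOnNhd ℝ f Set.univ) (hgan : AnalyticOnNhd ℝ g Set.univ)
    (hvnc : ∃ x y : ℝ, f x ≠ 0 ∧ f y ≠ 0 ∧ g x / f x ≠ g y / f y) :
    ∃ c₀ > (0 : ℝ), ∃ ε₁ > (0 : ℝ), ∀ E : ℝ, ∀ ε : ℝ, 0 < ε → ε < ε₁ →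
      volume {x ∈ Ico (0 : ℝ) 1 | f x ≠ 0 ∧ |g x / f x - E| < ε} <
        ENNReal.ofReal (ε ^ c₀) := by
  obtain ⟨C, a, ha, η, hη, hbound⟩ :=
    exists_volume_sublevel_mul_add_mul_le_rpow hfan hgan hvnc isCompact_Icc
  obtain ⟨M, hM, hfM⟩ : ∃ M > 0, ∀ x ∈ Icc (0 : ℝ) 1, |f x| ≤ M := by
    obtain ⟨M₀, hM₀⟩ :=
      isCompact_Icc.exists_bound_of_continuousOn (hfan.continuousOn.mono (subset_univ _))
    exact ⟨max M₀ 1, by positivity, fun x hx => (hM₀ x hx).trans (le_max_left _ _)⟩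
  obtain ⟨ε₁, hε₁, hsmall⟩ := exists_forall_mul_rpow_lt_rpow (C * M ^ a) ha
  refine ⟨a / 2, by positivity, min ε₁ (η / M), by positivity, fun E ε hε hεε₁ => ?_⟩
  obtain ⟨c, hc, hp⟩ := exists_abs_le_one_and_mk_mem_sphere E
  have hMε : M * ε < η := by
    rw [mul_comm, ← lt_div_iff₀ hM]
    exact hεε₁.trans_le (min_le_right _ _)
  calc volume {x ∈ Ico (0 : ℝ) 1 | f x ≠ 0 ∧ |g x / f x - E| < ε}
      ≤ volume {x ∈ Icc (0 : ℝ) 1 | |c * g x + c * -E * f x| ≤ M * ε} :=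
        measure_mono (sep_abs_div_sub_lt_subset Ico_subset_Icc_self
          (fun x hx => hfM x (Ico_subset_Icc_self hx)) hc E ε)
    _ ≤ ENNReal.ofReal (C * (M * ε) ^ a) := hbound _ hp (M * ε) (by positivity) hMε
    _ < ENNReal.ofReal (ε ^ (a / 2)) := by
        rw [ENNReal.ofReal_lt_ofReal_iff (by positivity), Real.mul_rpow hM.le hε.le, ← mul_assoc]
        exact hsmall ε hε (hεε₁.trans_le (min_le_left _ _))

/-- **Łojasiewicz inequality for meromorphic potentials on the torus.**
Let `v = g/f` with `f, g` real analytic on `𝕋 = ℝ/ℤ` (encoded as `1`-periodic real analytic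
functions on `ℝ`), `f` and `v` nonconstant, and `Z(f) = {x : f x = 0} ≠ ∅`.  Then there is
`c₀ = c₀(v) > 0` such that `mes {x ∈ 𝕋 : |v x - E| < ε} < ε ^ c₀` for all `E ∈ ℝ` and all
sufficiently small `ε > 0` (the set being taken within the domain where `f x ≠ 0`). -/
theorem statement3 (f g : ℝ → ℝ)
    (hfper : Function.Periodic f 1) (hgper : Function.Periodic g 1)
    (hfan : AnalyticOnNhd ℝ f Set.univ) (hgan : AnalyticOnNhd ℝ g Set.univ)
    (hfnc : ∃ x y : ℝ, f x ≠ f y)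
    (hvnc : ∃ x y : ℝ, f x ≠ 0 ∧ f y ≠ 0 ∧ g x / f x ≠ g y / f y)
    (hZ : ∃ x : ℝ, f x = 0) :
    ∃ c₀ > (0 : ℝ), ∃ ε₁ > (0 : ℝ), ∀ E : ℝ, ∀ ε : ℝ, 0 < ε → ε < ε₁ →
      volume {x ∈ Ico (0 : ℝ) 1 | f x ≠ 0 ∧ |g x / f x - E| < ε} <
        ENNReal.ofReal (ε ^ c₀) :=
  statement3_general f g hfan hgan hvnc
end

section
/- Hadamard bound for the auxiliary determinant: assume f, g extend analytically to the strip {z = x+iy : |y| ≤ ρ₁} with ‖f‖_∞ ≤ 1, and |φ̂(n)| < e^{−ρ|n|} for all n ∈ ℤ with φ̂(0) = 0. Then there is a constant C = C(f,g,φ,ρ₁) such that for all 0 < ε ≤ ε₀, all E ∈ ℝ, all N ∈ ℕ, and all z = x+iy with |y| ≤ ρ₁/2, |det B_N(z,E)| ≤ ∏_{0 ≤ n < N} [ |g(z+nω) − E·f(z+nω)|/√(1+E²) + C·ε₀ ]. -/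
open MeasureTheory Finset

noncomputable section

/-- The `N × N` matrix `B_N(z,E)` with entries (for `n, n' ∈ [0,N)`)
`B_N(z,E)(n,n) = (g(z+nω) - E·f(z+nω))/√(1+E²)` and
`B_N(z,E)(n,n') = ε·f(z+nω)·φ̂(n-n')/√(1+E²)` for `n ≠ n'`,
where here `f, g` are the analytic extensions to a complex strip. -/
def BNC (f g : ℂ → ℂ) (φhat : ℤ → ℂ) (ω ε E : ℝ) (N : ℕ) (z : ℂ) :
    Matrix (Fin N) (Fin N) ℂ := fun n n' =>
  if n = n' then
    (g (z + (n : ℕ) * (ω : ℂ)) - (E : ℂ) * f (z + (n : ℕ) * (ω : ℂ))) /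
      ((Real.sqrt (1 + E ^ 2) : ℝ) : ℂ)
  else
    (ε : ℂ) * f (z + (n : ℕ) * (ω : ℂ)) * φhat ((n : ℤ) - (n' : ℤ)) /
      ((Real.sqrt (1 + E ^ 2) : ℝ) : ℂ)

lemma aux_det_le (N : ℕ) (M : Matrix (Fin N) (Fin N) ℂ) :
    ‖M.det‖ ≤ ∏ i, ∑ j, ‖M i j‖ := by
  rw [Matrix.det_apply]
  calc ‖∑ σ : Equiv.Perm (Fin N), Equiv.Perm.sign σ • ∏ i, M (σ i) i‖
      ≤ ∑ σ : Equiv.Perm (Fin N), ‖(Equiv.Perm.sign σ : ℤˣ) • ∏ i, M (σ i) i‖ :=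
        norm_sum_le _ _
    _ = ∑ σ : Equiv.Perm (Fin N), ∏ i, ‖M i (σ i)‖ := by
        refine Fintype.sum_equiv (Equiv.inv _) _ _ fun σ => ?_
        have h1 : ‖(Equiv.Perm.sign σ : ℤˣ) • ∏ i, M (σ i) i‖ = ‖∏ i, M (σ i) i‖ := by
          rcases Int.units_eq_one_or (Equiv.Perm.sign σ) with h | h <;> simp [h]
        rw [h1, norm_prod]
        simpa using (Equiv.prod_comp σ (fun i => ‖M i (σ⁻¹ i)‖))
    _ ≤ ∑ p : Fin N → Fin N, ∏ i, ‖M i (p i)‖ := by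
        rw [← Finset.sum_image (f := fun p : Fin N → Fin N => ∏ i, ‖M i (p i)‖)
          (g := fun σ : Equiv.Perm (Fin N) => (σ : Fin N → Fin N))
          (fun x _ y _ h => Equiv.coe_fn_injective h)]
        exact Finset.sum_le_sum_of_subset_of_nonneg (Finset.subset_univ _)
          (fun p _ _ => Finset.prod_nonneg fun i _ => norm_nonneg _)
    _ = ∏ i, ∑ j, ‖M i j‖ := by
        rw [Finset.prod_univ_sum]
        simp [Fintype.piFinset_univ]

/-- **Hadamard bound for the auxiliary determinant.**
Assume `f, g` (real analytic on `𝕋`, with `f` and `v = g/f` nonconstant and `Z(f) ≠ ∅`)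
extend analytically to the strip `{z = x + iy : |y| ≤ ρ₁}`, with `‖f‖_∞ ≤ 1`, and that the
Fourier coefficients of the real analytic function `φ` satisfy `|φ̂(n)| < e^{-ρ|n|}` with
`φ̂(0) = 0`.  Then there is a constant `C = C(f,g,φ,ρ₁)` such that for all `0 < ε ≤ ε₀`,
all `E ∈ ℝ`, all `N ∈ ℕ`, and all `z = x + iy` with `|y| ≤ ρ₁/2`,
`|det B_N(z,E)| ≤ ∏_{0 ≤ n < N} [ |g(z+nω) - E·f(z+nω)|/√(1+E²) + C·ε₀ ]`. -/
theorem statement8 (ρ₁ ρ : ℝ) (hρ₁ : 0 < ρ₁) (hρ : 0 < ρ)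
    (f g : ℂ → ℂ)
    (hfper : ∀ z : ℂ, f (z + 1) = f z) (hgper : ∀ z : ℂ, g (z + 1) = g z)
    (hfan : AnalyticOnNhd ℂ f {z : ℂ | |z.im| ≤ ρ₁})
    (hgan : AnalyticOnNhd ℂ g {z : ℂ | |z.im| ≤ ρ₁})
    (hfreal : ∀ x : ℝ, (f x).im = 0) (hgreal : ∀ x : ℝ, (g x).im = 0)
    (hfnc : ∃ x y : ℝ, f x ≠ f y)
    (hvnc : ∃ x y : ℝ, f x ≠ 0 ∧ f y ≠ 0 ∧ g x / f x ≠ g y / f y)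
    (hZ : ∃ x : ℝ, f x = 0)
    (hfbd : ∀ x : ℝ, ‖f x‖ ≤ 1)
    (φhat : ℤ → ℂ)
    (hφdecay : ∀ n : ℤ, ‖φhat n‖ < Real.exp (-ρ * |(n : ℝ)|))
    (hφ0 : φhat 0 = 0)
    (hφreal : ∀ n : ℤ, φhat (-n) = starRingEnd ℂ (φhat n))
    (ω : ℝ) :
    ∃ C : ℝ, ∀ ε₀ ε : ℝ, 0 < ε → ε ≤ ε₀ → ∀ E : ℝ, ∀ N : ℕ, ∀ z : ℂ,
      |z.im| ≤ ρ₁ / 2 →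
      ‖(BNC f g φhat ω ε E N z).det‖ ≤
        ∏ n : Fin N,
          (‖g (z + (n : ℕ) * (ω : ℂ)) - (E : ℂ) * f (z + (n : ℕ) * (ω : ℂ))‖ /
              Real.sqrt (1 + E ^ 2) + C * ε₀) := by
  -- a uniform bound for `f` on the strip of width `ρ₁/2`
  have hper : Function.Periodic f 1 := hfper
  obtain ⟨M0, hM0⟩ : ∃ M0 : ℝ, ∀ w ∈ (Set.Icc (0:ℝ) 1 ×ℂ Set.Icc (-(ρ₁/2)) (ρ₁/2)),
      ‖f w‖ ≤ M0 := by
    have hK : IsCompact (Set.Icc (0:ℝ) 1 ×ℂ Set.Icc (-(ρ₁/2)) (ρ₁/2)) :=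
      Metric.isCompact_of_isClosed_isBounded (isClosed_Icc.reProdIm isClosed_Icc)
        (Bornology.IsBounded.reProdIm (Metric.isBounded_Icc (0:ℝ) 1) (Metric.isBounded_Icc (-(ρ₁/2)) (ρ₁/2)))
    refine hK.exists_bound_of_continuousOn (hfan.continuousOn.mono ?_)
    intro w hw
    rw [Complex.mem_reProdIm] at hw
    have h1 : |w.im| ≤ ρ₁ / 2 := abs_le.mpr ⟨hw.2.1, hw.2.2⟩
    exact le_trans h1 (by linarith)
  set Mf : ℝ := max M0 1 with hMf
  have hMf1 : (1:ℝ) ≤ Mf := le_max_right _ _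
  have hMf0 : (0:ℝ) ≤ Mf := le_trans zero_le_one hMf1
  have hfb : ∀ w : ℂ, |w.im| ≤ ρ₁ / 2 → ‖f w‖ ≤ Mf := by
    intro w hw
    have hval : f w = f (w - (⌊w.re⌋ : ℂ)) := by
      have := hper.sub_int_mul_eq (x := w) (n := ⌊w.re⌋)
      rw [mul_one] at this
      exact this.symm
    rw [hval]
    refine le_trans (hM0 _ ?_) (le_max_left _ _)
    rw [Complex.mem_reProdIm]
    constructor
    · simp only [Complex.sub_re, Complex.intCast_re]
      have h1 := Int.floor_le w.re
      have h2 := Int.lt_floor_add_one w.re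
      exact ⟨by linarith, by linarith⟩
    · simp only [Complex.sub_im, Complex.intCast_im, sub_zero]
      exact ⟨(abs_le.mp hw).1, (abs_le.mp hw).2⟩
  -- geometric data
  set r : ℝ := Real.exp (-ρ) with hrdef
  have hr0 : 0 < r := Real.exp_pos _
  have hr1 : r < 1 := Real.exp_lt_one_iff.mpr (by linarith)
  have hsummable : Summable (fun k : ℤ => r ^ k.natAbs) := by
    refine Summable.of_nat_of_neg ?_ ?_
    · simpa using summable_geometric_of_lt_one hr0.le hr1
    · simpa using summable_geometric_of_lt_one hr0.le hr1
  set T : ℝ := ∑' k : ℤ, r ^ k.natAbs with hTdef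
  have hT0 : 0 ≤ T := tsum_nonneg fun k => pow_nonneg hr0.le _
  refine ⟨Mf * T, ?_⟩
  intro ε₀ ε hε hεε₀ E N z hz
  have hε₀ : 0 ≤ ε₀ := le_trans hε.le hεε₀
  have hsq1 : (1:ℝ) ≤ Real.sqrt (1 + E ^ 2) := by
    have h := Real.sqrt_le_sqrt (show (1:ℝ) ≤ 1 + E ^ 2 by nlinarith [sq_nonneg E])
    rwa [Real.sqrt_one] at h
  have hsq0 : (0:ℝ) < Real.sqrt (1 + E ^ 2) := lt_of_lt_of_le one_pos hsq1
  refine le_trans (aux_det_le N _) (Finset.prod_le_prod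
    (fun i _ => Finset.sum_nonneg fun j _ => norm_nonneg _) (fun i _ => ?_))
  -- bound the row sum of row `i`
  have him : ∀ n : ℕ, |(z + (n:ℂ) * (ω:ℂ)).im| ≤ ρ₁ / 2 := by
    intro n
    have : (z + (n:ℂ) * (ω:ℂ)).im = z.im := by
      simp [Complex.add_im, Complex.mul_im]
    rw [this]; exact hz
  rw [← Finset.add_sum_erase Finset.univ _ (Finset.mem_univ i)]
  refine add_le_add ?_ ?_
  · -- diagonal entry
    have : BNC f g φhat ω ε E N z i i =
        (g (z + (i : ℕ) * (ω : ℂ)) - (E : ℂ) * f (z + (i : ℕ) * (ω : ℂ))) /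
          ((Real.sqrt (1 + E ^ 2) : ℝ) : ℂ) := by
      simp [BNC]
    rw [this, norm_div]
    simp only [Complex.norm_real, Real.norm_eq_abs, abs_of_pos hsq0, le_refl]
  · -- off-diagonal sum
    have hstep : ∀ j ∈ Finset.univ.erase i,
        ‖BNC f g φhat ω ε E N z i j‖ ≤ ε₀ * Mf * r ^ ((i:ℤ) - (j:ℤ)).natAbs := by
      intro j hj
      have hij : i ≠ j := fun h => (Finset.mem_erase.mp hj).1 h.symm
      have hBij : BNC f g φhat ω ε E N z i j =
          (ε : ℂ) * f (z + (i : ℕ) * (ω : ℂ)) * φhat ((i : ℤ) - (j : ℤ)) /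
            ((Real.sqrt (1 + E ^ 2) : ℝ) : ℂ) := by
        simp [BNC, hij]
      rw [hBij, norm_div]
      have h1 : ‖((Real.sqrt (1 + E ^ 2) : ℝ) : ℂ)‖ = Real.sqrt (1 + E ^ 2) := by
        simp [Complex.norm_real, abs_of_pos hsq0]
      rw [h1]
      refine le_trans (div_le_self (norm_nonneg _) hsq1) ?_
      rw [norm_mul, norm_mul]
      have hφ : ‖φhat ((i:ℤ) - (j:ℤ))‖ ≤ r ^ ((i:ℤ) - (j:ℤ)).natAbs := by
        refine le_trans (hφdecay _).le (le_of_eq ?_)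
        rw [hrdef, ← Real.exp_nat_mul]
        congr 1
        rw [show |((((i:ℤ) - (j:ℤ)) : ℤ) : ℝ)| = ((((i:ℤ) - (j:ℤ)).natAbs : ℕ) : ℝ) by
          rw [Nat.cast_natAbs]; push_cast; ring]
        ring
      have hε' : ‖(ε : ℂ)‖ ≤ ε₀ := by
        simp only [Complex.norm_real, Real.norm_eq_abs, abs_of_pos hε]
        exact hεε₀
      exact mul_le_mul (mul_le_mul hε' (hfb _ (him i)) (norm_nonneg _) hε₀)
        hφ (norm_nonneg _) (by positivity)
    refine le_trans (Finset.sum_le_sum hstep) ?_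
    rw [← Finset.mul_sum]
    have hsum_le : ∑ j ∈ Finset.univ.erase i, r ^ ((i:ℤ) - (j:ℤ)).natAbs ≤ T := by
      rw [← Finset.sum_image (f := fun k : ℤ => r ^ k.natAbs)
        (g := fun j : Fin N => (i:ℤ) - (j:ℤ)) (s := Finset.univ.erase i)
        (fun x _ y _ h => by
          have hxy : (i:ℤ) - (x:ℤ) = (i:ℤ) - (y:ℤ) := h
          have : (x:ℤ) = (y:ℤ) := by omega
          exact Fin.ext (by exact_mod_cast this))]
      exact Summable.sum_le_tsum _ (fun k _ => pow_nonneg hr0.le _) hsummable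
    have hfin : ε₀ * Mf * (∑ j ∈ Finset.univ.erase i, r ^ ((i:ℤ) - (j:ℤ)).natAbs) ≤
        ε₀ * Mf * T := mul_le_mul_of_nonneg_left hsum_le (by positivity)
    exact le_trans hfin (le_of_eq (by ring))



end
end
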